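/- Let G be a graph and α a walk in G. Repeatedly pruning α results in a unique non-prunable walk: any two maximal sequences of prunes applied to α terminate in the same non-prunable walk, independent of the order in which the prunes are performed. -/

import Mathlib

/-- A graph: vertex type `V` with a symmetric adjacency relation (loops allowed). -/
structure WGraph (V : Type) where
  Adj : V → V → Prop
  symm : Symmetric Adj

variable {V W X : Type}

/-- `l` is the (nonempty) vertex sequence of a walk in `G`. -/
def IsWalk (G : WGraph V) (l : List V) : Prop :=
  l ≠ [] ∧ l.Chain' G.Adj

/-- `l` is a walk in `G` from `x` to `y`. -/
def IsWalkFrom (G : WGraph V) (x y : V) (l : List V) : Prop :=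
  l.Chain' G.Adj ∧ l.head? = some x ∧ l.getLast? = some y

/-- Concatenation of walks sharing an endpoint: follow `l`, then `m`. -/
def wconcat (l m : List V) : List V := l ++ m.tail

/-- A walk is prunable if some vertex `vᵢ` satisfies `vᵢ = vᵢ₊₂`. -/
def Prunable (l : List V) : Prop :=
  ∃ (p s : List V) (a b : V), l = p ++ a :: b :: a :: s

/-- `m` is obtained from `l` by a single prune (deleting `vᵢ, vᵢ₊₁` when `vᵢ = vᵢ₊₂`). -/
def PruneOf (l m : List V) : Prop :=
  ∃ (p s : List V) (a b : V), l = p ++ a :: b :: a :: s ∧ m = p ++ a :: s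

/-- A single prune step (in either direction) between walks of `G`. -/
def PruneStep (G : WGraph V) (l m : List V) : Prop :=
  IsWalk G l ∧ IsWalk G m ∧ (PruneOf l m ∨ PruneOf m l)

/-- Prune equivalence: the equivalence relation on walks of `G` generated by prunes. -/
def PruneEqv (G : WGraph V) : List V → List V → Prop :=
  Relation.EqvGen (PruneStep G)

/-- A spider move: two walks of `G` of the same length which agree at every index
except (at most) a single interior index. -/
def SpiderStep (G : WGraph V) (l m : List V) : Prop :=
  IsWalk G l ∧ IsWalk G m ∧ l.length = m.length ∧
    ∃ i : ℕ, 0 < i ∧ i + 1 < l.length ∧ ∀ j : ℕ, j ≠ i → l[j]? = m[j]?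

/-- Homotopy rel endpoints (`≡`): the equivalence relation on walks of `G`
generated by prunes and spider moves. -/
def HomEqv (G : WGraph V) : List V → List V → Prop :=
  Relation.EqvGen (fun l m => PruneStep G l m ∨ SpiderStep G l m)

/-- A graph morphism. -/
def IsHom (G : WGraph V) (H : WGraph W) (f : V → W) : Prop :=
  ∀ {u v : V}, G.Adj u v → H.Adj (f u) (f v)

/-- One step of a ×-homotopy between graph morphisms. -/
def HtpyStep (G : WGraph V) (H : WGraph W) (f g : V → W) : Prop :=
  IsHom G H f ∧ IsHom G H g ∧ ∀ u v, G.Adj u v → H.Adj (f u) (g v)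

/-- ×-homotopy of graph morphisms. -/
def Homotopic (G : WGraph V) (H : WGraph W) : (V → W) → (V → W) → Prop :=
  Relation.ReflTransGen (HtpyStep G H)

/-!
Prunes shorten a walk by two vertices, so repeated pruning terminates. Two prunes of the
same walk either give the same walk or can be completed to a common walk by at most one
further prune each: if the pruned positions are two apart, `a b a b a` prunes to `a b a`
either way and then to `a`; if they are further apart, the prunes commute. This strong
local confluence makes pruning Church–Rosser, so the non-prunable walk reached is unique.
-/

namespace PruneOf

variable {l m n : List V}

theorem cons (x : V) (h : PruneOf l m) : PruneOf (x :: l) (x :: m) := by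
  obtain ⟨p, s, a, b, rfl, rfl⟩ := h
  exact ⟨x :: p, s, a, b, rfl, rfl⟩

theorem prunable (h : PruneOf l m) : Prunable l := by
  obtain ⟨p, s, a, b, hl, -⟩ := h
  exact ⟨p, s, a, b, hl⟩

theorem length_add_two (h : PruneOf l m) : m.length + 2 = l.length := by
  obtain ⟨p, s, a, b, rfl, rfl⟩ := h
  simp only [List.length_append, List.length_cons]
  omega

theorem joinable_of_length_le {a b c d : V} :
    ∀ {p q s t : List V}, p.length ≤ q.length →
      p ++ a :: b :: a :: s = q ++ c :: d :: c :: t →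
      p ++ a :: s = q ++ c :: t ∨ ∃ e, PruneOf (p ++ a :: s) e ∧ PruneOf (q ++ c :: t) e
  | [], [], _, _, _, h => by
    simp only [List.nil_append, List.cons.injEq] at h ⊢
    obtain ⟨rfl, rfl, -, rfl⟩ := h
    exact Or.inl ⟨rfl, rfl⟩
  | [], [_], _, _, _, h => by
    simp only [List.nil_append, List.cons_append, List.cons.injEq] at h
    obtain ⟨rfl, rfl, rfl, rfl⟩ := h
    exact Or.inl rfl
  | [], [_, _], _, t, _, h => by
    simp only [List.nil_append, List.cons_append, List.cons.injEq] at h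
    obtain ⟨rfl, rfl, rfl, rfl⟩ := h
    exact Or.inr ⟨a :: t, ⟨[], t, a, d, rfl, rfl⟩, ⟨[], t, a, b, rfl, rfl⟩⟩
  | [], _ :: _ :: _ :: q, _, t, _, h => by
    simp only [List.nil_append, List.cons_append, List.cons.injEq] at h
    obtain ⟨rfl, rfl, rfl, rfl⟩ := h
    exact Or.inr ⟨a :: (q ++ c :: t), ⟨a :: q, t, c, d, rfl, rfl⟩,
      ⟨[], q ++ c :: t, a, b, rfl, rfl⟩⟩
  | _ :: _, [], _, _, hle, _ => by simp at hle
  | x :: p, _ :: q, _, _, hle, h => by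
    simp only [List.cons_append, List.cons.injEq] at h
    obtain ⟨rfl, h⟩ := h
    rcases joinable_of_length_le (Nat.le_of_succ_le_succ hle) h with heq | ⟨e, hp, hq⟩
    · exact Or.inl (by rw [List.cons_append, List.cons_append, heq])
    · exact Or.inr ⟨x :: e, hp.cons x, hq.cons x⟩

theorem diamond (hm : PruneOf l m) (hn : PruneOf l n) :
    ∃ e, Relation.ReflGen PruneOf m e ∧ Relation.ReflGen PruneOf n e := by
  obtain ⟨p, s, a, b, rfl, rfl⟩ := hm
  obtain ⟨q, t, c, d, hl, rfl⟩ := hn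
  rcases le_total p.length q.length with hle | hle
  · rcases joinable_of_length_le hle hl with heq | ⟨e, hp, hq⟩
    · exact ⟨_, .refl, heq ▸ .refl⟩
    · exact ⟨e, .single hp, .single hq⟩
  · rcases joinable_of_length_le hle hl.symm with heq | ⟨e, hq, hp⟩
    · exact ⟨_, heq ▸ .refl, .refl⟩
    · exact ⟨e, .single hp, .single hq⟩

end PruneOf

theorem exists_reflTransGen_pruneOf_not_prunable (l : List V) :
    ∃ β, Relation.ReflTransGen PruneOf l β ∧ ¬ Prunable β := by
  induction h : l.length using Nat.strong_induction_on generalizing l with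
  | _ k ih =>
    by_cases hl : Prunable l
    · obtain ⟨p, s, a, b, rfl⟩ := hl
      have hprune : PruneOf (p ++ a :: b :: a :: s) (p ++ a :: s) := ⟨p, s, a, b, rfl, rfl⟩
      have hlt : (p ++ a :: s).length < k := by have := hprune.length_add_two; omega
      obtain ⟨β, hβ, hβnf⟩ := ih _ hlt _ rfl
      exact ⟨β, .head hprune hβ, hβnf⟩
    · exact ⟨l, .refl, hl⟩

theorem eq_of_reflTransGen_pruneOf_of_not_prunable {l m : List V} (hl : ¬ Prunable l)
    (h : Relation.ReflTransGen PruneOf l m) : l = m := by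
  rcases h.cases_head with rfl | ⟨_, hstep, -⟩
  · rfl
  · exact absurd hstep.prunable hl

theorem pruneOf_church_rosser {l m n : List V} (hm : Relation.ReflTransGen PruneOf l m)
    (hn : Relation.ReflTransGen PruneOf l n) :
    Relation.Join (Relation.ReflTransGen PruneOf) m n :=
  Relation.church_rosser
    (fun _ _ _ h₁ h₂ => (h₁.diamond h₂).imp fun _ he => ⟨he.1, he.2.to_reflTransGen⟩) hm hn

theorem stmt0_general (α : List V) :
    ∃! β : List V, Relation.ReflTransGen PruneOf α β ∧ ¬ Prunable β := by
  obtain ⟨β, hαβ, hβ⟩ := exists_reflTransGen_pruneOf_not_prunable α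
  refine ⟨β, ⟨hαβ, hβ⟩, fun γ ⟨hαγ, hγ⟩ => ?_⟩
  obtain ⟨δ, hγδ, hβδ⟩ := pruneOf_church_rosser hαγ hαβ
  rw [eq_of_reflTransGen_pruneOf_of_not_prunable hγ hγδ,
    eq_of_reflTransGen_pruneOf_of_not_prunable hβ hβδ]

/-- Repeated pruning of a walk results in a unique non-prunable walk,
independent of the order in which the prunes are performed. -/
theorem stmt0 (G : WGraph V) (α : List V) (hα : IsWalk G α) :
    ∃! β : List V, Relation.ReflTransGen PruneOf α β ∧ ¬ Prunable β :=
  stmt0_general α
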